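/- arXiv:2501.06352 — 3 statements merged into one kernel-verified Lean document; each statement's English description precedes it below -/
import Mathlib

section
/- Given two vectors u, v in ℝ², if ⟨u, v⟩ > 0 then there exists a unique matrix A in SL₂(ℝ) which is symmetric, positive-definite, and satisfies A u = v. -/
/-!
Write `perp u = (u₁, -u₀)` for `u` turned by a right angle. With `s = ⟨u, v⟩`, the matrix
`A = s⁻¹ (v vᵀ + perp u (perp u)ᵀ)` is symmetric, has quadratic form
`s⁻¹ (⟨x, v⟩² + ⟨x, perp u⟩²)`, sends `u` to `v` because `perp u ⊥ u`, and has determinant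
`s⁻² det[v, perp u]² = 1` since `det[v, perp u] = -s`.
For uniqueness, the adjugate of a symmetric `2 × 2` matrix `A` with `det A = 1` is `A⁻¹`, which
reads `A (perp (A u)) = perp u`. So any such `A` with `A u = v` is prescribed on `u` and on
`perp v`, and these form a basis because `det[u, perp v] = -⟨u, v⟩ ≠ 0`.
-/

open Matrix

variable {R : Type*}

def perp [Neg R] (u : Fin 2 → R) : Fin 2 → R := ![u 1, -u 0]

section CommRing

variable [CommRing R]

theorem perp_dotProduct_self (u : Fin 2 → R) : perp u ⬝ᵥ u = 0 := by
  simp [perp, dotProduct, Fin.sum_univ_two]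
  ring

theorem mulVec_perp_transpose_mulVec (A : Matrix (Fin 2) (Fin 2) R) (u : Fin 2 → R) :
    A *ᵥ perp (Aᵀ *ᵥ u) = A.det • perp u := by
  ext i
  fin_cases i <;> simp [perp, mulVec, dotProduct, Fin.sum_univ_two, det_fin_two] <;> ring

theorem Matrix.IsSymm.mulVec_perp_mulVec {A : Matrix (Fin 2) (Fin 2) R} (hA : A.IsSymm)
    (hdet : A.det = 1) (u : Fin 2 → R) : A *ᵥ perp (A *ᵥ u) = perp u := by
  simpa [hdet, hA.eq] using mulVec_perp_transpose_mulVec A u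

theorem det_vecMulVec_add_vecMulVec_perp (u v : Fin 2 → R) :
    (vecMulVec v v + vecMulVec (perp u) (perp u)).det = (u ⬝ᵥ v) ^ 2 := by
  simp [det_fin_two, perp, vecMulVec, dotProduct, Fin.sum_univ_two]
  ring

theorem dotProduct_vecMulVec_self_mulVec (w x : Fin 2 → R) :
    x ⬝ᵥ (vecMulVec w w *ᵥ x) = (x ⬝ᵥ w) ^ 2 := by
  rw [vecMulVec_mulVec, op_smul_eq_smul, dotProduct_smul, smul_eq_mul, dotProduct_comm, sq]

end CommRing

section Field

variable [Field R]

theorem eq_zero_of_dotProduct_eq_zero_of_perp {a b x : Fin 2 → R} (hab : a ⬝ᵥ b ≠ 0)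
    (ha : x ⬝ᵥ a = 0) (hb : x ⬝ᵥ perp b = 0) : x = 0 := by
  simp only [perp, dotProduct, Fin.sum_univ_two, cons_val_zero, cons_val_one] at hab ha hb
  ext i
  fin_cases i <;> refine mul_left_cancel₀ hab ?_ <;>
    simp only [Fin.zero_eta, Fin.mk_one, Pi.zero_apply]
  · linear_combination b 0 * ha + a 1 * hb
  · linear_combination b 1 * ha - a 0 * hb

theorem eq_zero_of_mulVec_eq_zero_of_perp {m : Type*} {a b : Fin 2 → R} (hab : a ⬝ᵥ b ≠ 0)
    {C : Matrix m (Fin 2) R} (ha : C *ᵥ a = 0) (hb : C *ᵥ perp b = 0) : C = 0 :=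
  funext fun i => eq_zero_of_dotProduct_eq_zero_of_perp hab (congrFun ha i) (congrFun hb i)

theorem eq_of_isSymm_of_det_eq_one_of_mulVec_eq {A B : Matrix (Fin 2) (Fin 2) R}
    {u v : Fin 2 → R} (huv : u ⬝ᵥ v ≠ 0) (hA : A.IsSymm) (hAdet : A.det = 1) (hAu : A *ᵥ u = v)
    (hB : B.IsSymm) (hBdet : B.det = 1) (hBu : B *ᵥ u = v) : A = B := by
  rw [← sub_eq_zero]
  refine eq_zero_of_mulVec_eq_zero_of_perp huv ?_ ?_ <;> rw [sub_mulVec, sub_eq_zero]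
  · rw [hAu, hBu]
  · rw [← hAu, hA.mulVec_perp_mulVec hAdet, hAu, ← hBu, hB.mulVec_perp_mulVec hBdet]

noncomputable def sl2PosDefSending (u v : Fin 2 → R) : Matrix (Fin 2) (Fin 2) R :=
  (u ⬝ᵥ v)⁻¹ • (vecMulVec v v + vecMulVec (perp u) (perp u))

theorem isSymm_sl2PosDefSending (u v : Fin 2 → R) : (sl2PosDefSending u v).IsSymm :=
  (IsSymm.add (transpose_vecMulVec v v) (transpose_vecMulVec _ _)).smul _

variable {u v : Fin 2 → R}

theorem det_sl2PosDefSending (huv : u ⬝ᵥ v ≠ 0) : (sl2PosDefSending u v).det = 1 := by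
  rw [sl2PosDefSending, det_smul, det_vecMulVec_add_vecMulVec_perp, Fintype.card_fin,
    inv_pow, inv_mul_cancel₀ (pow_ne_zero 2 huv)]

theorem sl2PosDefSending_mulVec (huv : u ⬝ᵥ v ≠ 0) : sl2PosDefSending u v *ᵥ u = v := by
  rw [sl2PosDefSending, smul_mulVec, add_mulVec, vecMulVec_mulVec, vecMulVec_mulVec,
    perp_dotProduct_self, MulOpposite.op_zero, zero_smul, add_zero, op_smul_eq_smul, smul_smul,
    dotProduct_comm v u, inv_mul_cancel₀ huv, one_smul]

end Field

theorem dotProduct_sl2PosDefSending_mulVec_pos [Field R] [LinearOrder R] [IsStrictOrderedRing R]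
    {u v x : Fin 2 → R} (huv : 0 < u ⬝ᵥ v) (hx : x ≠ 0) :
    0 < x ⬝ᵥ (sl2PosDefSending u v *ᵥ x) := by
  rw [sl2PosDefSending, smul_mulVec, add_mulVec, dotProduct_smul, dotProduct_add,
    dotProduct_vecMulVec_self_mulVec, dotProduct_vecMulVec_self_mulVec, smul_eq_mul]
  refine mul_pos (inv_pos.2 huv) (lt_of_le_of_ne (by positivity) fun hzero => hx ?_)
  rw [eq_comm, add_eq_zero_iff_of_nonneg (sq_nonneg _) (sq_nonneg _), sq_eq_zero_iff,
    sq_eq_zero_iff] at hzero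
  exact eq_zero_of_dotProduct_eq_zero_of_perp (dotProduct_comm u v ▸ huv.ne') hzero.1 hzero.2

/-- Given two vectors `u, v ∈ ℝ²` with `⟨u, v⟩ > 0`, there exists a unique matrix
`A ∈ SL₂(ℝ)` (i.e. `det A = 1`) which is symmetric, positive-definite, and
satisfies `A u = v`. -/
theorem statement0 (u v : Fin 2 → ℝ) (huv : 0 < u ⬝ᵥ v) :
    ∃! A : Matrix (Fin 2) (Fin 2) ℝ,
      A.det = 1 ∧ A.IsSymm ∧ (∀ x : Fin 2 → ℝ, x ≠ 0 → 0 < x ⬝ᵥ A.mulVec x) ∧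
        A.mulVec u = v := by
  refine ⟨sl2PosDefSending u v, ⟨det_sl2PosDefSending huv.ne', isSymm_sl2PosDefSending u v,
    fun x hx => dotProduct_sl2PosDefSending_mulVec_pos huv hx,
    sl2PosDefSending_mulVec huv.ne'⟩, ?_⟩
  rintro B ⟨hdet, hsymm, -, hBu⟩
  exact eq_of_isSymm_of_det_eq_one_of_mulVec_eq huv.ne' hsymm hdet hBu
    (isSymm_sl2PosDefSending u v) (det_sl2PosDefSending huv.ne')
    (sl2PosDefSending_mulVec huv.ne')
end

section
/- Given two vectors u, v in ℝ² with ⟨u, v⟩ > 0, the matrix A = (1/⟨u,v⟩) · B Bᵀ, where B is the 2×2 matrix with columns v and Ju (and J is rotation by 90 degrees, J = [[0,1],[-1,0]]), is symmetric, positive-definite, has determinant 1, and satisfies A u = v. -/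
open Matrix

/-- Given `u, v ∈ ℝ²` with `⟨u, v⟩ > 0`, the matrix `A = (1/⟨u,v⟩) · B Bᵀ`,
where `B` has columns `v` and `J u` (with `J = [[0,1],[-1,0]]` rotation by 90°),
is symmetric, positive-definite, has determinant 1, and satisfies `A u = v`. -/
theorem statement1 (u v : Fin 2 → ℝ) (huv : 0 < u ⬝ᵥ v) :
    let J : Matrix (Fin 2) (Fin 2) ℝ := !![0, 1; -1, 0]
    let B : Matrix (Fin 2) (Fin 2) ℝ :=
      Matrix.of fun i j => if j = (0 : Fin 2) then v i else J.mulVec u i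
    let A : Matrix (Fin 2) (Fin 2) ℝ := (u ⬝ᵥ v)⁻¹ • (B * Bᵀ)
    A.IsSymm ∧ (∀ x : Fin 2 → ℝ, x ≠ 0 → 0 < x ⬝ᵥ A.mulVec x) ∧
      A.det = 1 ∧ A.mulVec u = v := by
  intro J B A
  have hs : (0:ℝ) < u 0 * v 0 + u 1 * v 1 := by
    simpa [dotProduct, Fin.sum_univ_two] using huv
  have hs' : u 0 * v 0 + u 1 * v 1 ≠ 0 := ne_of_gt hs
  refine ⟨?_, ?_, ?_, ?_⟩
  · show Aᵀ = A
    simp [A, Matrix.transpose_smul, Matrix.transpose_mul]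
  · intro x hx
    have hx' : x 0 ≠ 0 ∨ x 1 ≠ 0 := by
      by_contra h
      push_neg at h
      exact hx (funext fun i => by fin_cases i <;> simp [h.1, h.2])
    have key : 0 < (v 0 * x 0 + v 1 * x 1)^2 + (u 1 * x 0 - u 0 * x 1)^2 := by
      rcases (lt_or_eq_of_le (by positivity : (0:ℝ) ≤ (v 0 * x 0 + v 1 * x 1)^2 + (u 1 * x 0 - u 0 * x 1)^2)) with h | h
      · exact h
      · exfalso
        have ha : v 0 * x 0 + v 1 * x 1 = 0 := by nlinarith [sq_nonneg (v 0 * x 0 + v 1 * x 1), sq_nonneg (u 1 * x 0 - u 0 * x 1)]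
        have hb : u 1 * x 0 - u 0 * x 1 = 0 := by nlinarith [sq_nonneg (v 0 * x 0 + v 1 * x 1), sq_nonneg (u 1 * x 0 - u 0 * x 1)]
        have h0 : x 0 = 0 := by
          have : (u 0 * v 0 + u 1 * v 1) * x 0 = u 0 * (v 0 * x 0 + v 1 * x 1) + v 1 * (u 1 * x 0 - u 0 * x 1) := by ring
          rw [ha, hb] at this
          simpa using (mul_eq_zero.mp (by linarith)).resolve_left hs'
        have h1 : x 1 = 0 := by
          have : (u 0 * v 0 + u 1 * v 1) * x 1 = u 1 * (v 0 * x 0 + v 1 * x 1) - v 0 * (u 1 * x 0 - u 0 * x 1) := by ring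
          rw [ha, hb] at this
          simpa using (mul_eq_zero.mp (by linarith)).resolve_left hs'
        rcases hx' with h | h <;> [exact h h0; exact h h1]
    have hexp : x ⬝ᵥ A.mulVec x =
        (u 0 * v 0 + u 1 * v 1)⁻¹ * ((v 0 * x 0 + v 1 * x 1)^2 + (u 1 * x 0 - u 0 * x 1)^2) := by
      simp [A, B, J, Matrix.mulVec, dotProduct, Matrix.mul_apply, Fin.sum_univ_two,
        Matrix.smul_apply, Matrix.transpose_apply, Fin.isValue]
      ring
    rw [hexp]
    positivity
  · have hdetB : B.det = -(u 0 * v 0 + u 1 * v 1) := by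
      simp [B, J, Matrix.det_fin_two, Matrix.mulVec, dotProduct, Fin.sum_univ_two]
      ring
    have : A.det = ((u 0 * v 0 + u 1 * v 1)⁻¹)^2 * (B.det * B.det) := by
      simp only [A]
      rw [Matrix.det_smul, Matrix.det_mul, Matrix.det_transpose]
      simp [dotProduct, Fin.sum_univ_two, Fintype.card_fin]
    rw [this, hdetB]
    field_simp
  · funext i
    fin_cases i <;>
    · simp [A, B, J, Matrix.mulVec, dotProduct, Matrix.mul_apply, Fin.sum_univ_two,
        Matrix.smul_apply, Matrix.transpose_apply]
      field_simp
      ring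
end

section
/- Let M be a smooth orientable 2-manifold with a smooth positive density (volume form) μ, let u be a smooth vector field on M and ω a smooth 1-form on M such that ω(u) > 0 everywhere. Then there is a unique smooth Riemannian metric g on M whose associated volume form equals μ and such that the musical isomorphism of g sends u to ω (i.e., g(u, ·) = ω). -/
open Matrix

/-- Pointwise uniqueness: two symmetric matrices with the same determinant and
the same action on `u` (with `B` positive definite) agree, given `⟨w,u⟩ > 0`. -/
lemma statement5_uniq_aux (Fx : ℝ) (uu w : Fin 2 → ℝ) (hp : 0 < w ⬝ᵥ uu)
    (A B : Matrix (Fin 2) (Fin 2) ℝ)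
    (hAs : A.IsSymm) (hAdet : A.det = Fx ^ 2) (hAu : A.mulVec uu = w)
    (hBs : B.IsSymm) (hBpos : ∀ y : Fin 2 → ℝ, y ≠ 0 → 0 < y ⬝ᵥ B.mulVec y)
    (hBdet : B.det = Fx ^ 2) (hBu : B.mulVec uu = w) : A = B := by
  have hune : uu ≠ 0 := by
    rintro rfl
    simp at hp
  have hA10 : A 1 0 = A 0 1 := hAs.apply 0 1
  have hB10 : B 1 0 = B 0 1 := hBs.apply 0 1
  have e1 := congrFun hAu 0
  have e2 := congrFun hAu 1
  have f1 := congrFun hBu 0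
  have f2 := congrFun hBu 1
  simp [Matrix.mulVec, dotProduct, Fin.sum_univ_two] at e1 e2 f1 f2
  rw [hA10] at e2
  rw [hB10] at f2
  rw [Matrix.det_fin_two, hA10] at hAdet
  rw [Matrix.det_fin_two, hB10] at hBdet
  have hD : A 0 0 * A 1 1 - A 0 1 * A 0 1 = B 0 0 * B 1 1 - B 0 1 * B 0 1 := by
    rw [hAdet, hBdet]
  have hQ : 0 < uu ⬝ᵥ B.mulVec uu := hBpos uu hune
  simp [Matrix.mulVec, dotProduct, Fin.sum_univ_two, hB10] at hQ
  have h1 : (A 0 0 - B 0 0) * uu 0 + (A 0 1 - B 0 1) * uu 1 = 0 := by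
    linear_combination e1 - f1
  have h2 : (A 0 1 - B 0 1) * uu 0 + (A 1 1 - B 1 1) * uu 1 = 0 := by
    linear_combination e2 - f2
  have hQ' : 0 < B 0 0 * uu 0 ^ 2 + 2 * B 0 1 * uu 0 * uu 1 + B 1 1 * uu 1 ^ 2 := by
    nlinarith [hQ]
  have hQne : B 0 0 * uu 0 ^ 2 + 2 * B 0 1 * uu 0 * uu 1 + B 1 1 * uu 1 ^ 2 ≠ 0 :=
    ne_of_gt hQ'
  have hα : (A 0 0 - B 0 0) *
      (B 0 0 * uu 0 ^ 2 + 2 * B 0 1 * uu 0 * uu 1 + B 1 1 * uu 1 ^ 2) = 0 := by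
    linear_combination (uu 1) ^ 2 * hD +
      (B 0 0 * uu 0 + (A 0 1 + B 0 1) * uu 1) * h1 - (A 0 0 * uu 1) * h2
  have hγ : (A 1 1 - B 1 1) *
      (B 0 0 * uu 0 ^ 2 + 2 * B 0 1 * uu 0 * uu 1 + B 1 1 * uu 1 ^ 2) = 0 := by
    linear_combination (uu 0) ^ 2 * hD +
      (B 1 1 * uu 1 + (A 0 1 + B 0 1) * uu 0) * h2 - (A 1 1 * uu 0) * h1
  have h00 : A 0 0 = B 0 0 := by
    rcases mul_eq_zero.mp hα with h | h
    · linarith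
    · exact absurd h hQne
  have h11 : A 1 1 = B 1 1 := by
    rcases mul_eq_zero.mp hγ with h | h
    · linarith
    · exact absurd h hQne
  have hb1 : (A 0 1 - B 0 1) * uu 1 = 0 := by
    rw [h00] at h1; linarith
  have hb0 : (A 0 1 - B 0 1) * uu 0 = 0 := by
    rw [h11] at h2; linarith
  have hucomp : uu 0 ≠ 0 ∨ uu 1 ≠ 0 := by
    by_contra h
    push_neg at h
    apply hune
    funext i
    fin_cases i <;> simp [h.1, h.2]
  have h01 : A 0 1 = B 0 1 := by
    rcases hucomp with h | h
    · have := mul_eq_zero.mp hb0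
      rcases this with h' | h'
      · linarith
      · exact absurd h' h
    · have := mul_eq_zero.mp hb1
      rcases this with h' | h'
      · linarith
      · exact absurd h' h
  rw [Matrix.eta_fin_two A, Matrix.eta_fin_two B, hA10, hB10, h00, h01, h11]

/-- Lemma "pointwise", in local coordinates: on a smooth orientable surface,
represented by an open coordinate domain `Ω ⊆ ℝ²` carrying a smooth positive
density `F` (so that `μ = F dx∧dy`), given a smooth vector field `u` and a
smooth covector field `ω` (written via the standard pairing) with `⟨ω, u⟩ > 0`
everywhere, there is a smooth Riemannian metric `g` (a smooth field of
symmetric positive-definite matrices), unique on `Ω`, whose volume density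
equals `μ` (i.e. `det g = F²`) and such that `g u = ω` (i.e. `g(u,·) = ω`). -/
theorem statement5 (Ω : Set (Fin 2 → ℝ)) (hΩ : IsOpen Ω)
    (F : (Fin 2 → ℝ) → ℝ) (hF : ContDiffOn ℝ (⊤ : ℕ∞) F Ω) (hFpos : ∀ x ∈ Ω, 0 < F x)
    (u ω : (Fin 2 → ℝ) → (Fin 2 → ℝ))
    (hu : ContDiffOn ℝ (⊤ : ℕ∞) u Ω) (hω : ContDiffOn ℝ (⊤ : ℕ∞) ω Ω)
    (hpair : ∀ x ∈ Ω, 0 < ω x ⬝ᵥ u x) :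
    ∃ g : (Fin 2 → ℝ) → Matrix (Fin 2) (Fin 2) ℝ,
      ((∀ i j, ContDiffOn ℝ (⊤ : ℕ∞) (fun x => g x i j) Ω) ∧
        ∀ x ∈ Ω, (g x).IsSymm ∧
          (∀ y : Fin 2 → ℝ, y ≠ 0 → 0 < y ⬝ᵥ (g x).mulVec y) ∧
          (g x).det = (F x) ^ 2 ∧ (g x).mulVec (u x) = ω x) ∧
      ∀ g' : (Fin 2 → ℝ) → Matrix (Fin 2) (Fin 2) ℝ,
        ((∀ i j, ContDiffOn ℝ (⊤ : ℕ∞) (fun x => g' x i j) Ω) ∧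
          ∀ x ∈ Ω, (g' x).IsSymm ∧
            (∀ y : Fin 2 → ℝ, y ≠ 0 → 0 < y ⬝ᵥ (g' x).mulVec y) ∧
            (g' x).det = (F x) ^ 2 ∧ (g' x).mulVec (u x) = ω x) →
        Set.EqOn g g' Ω := by
  classical
  -- `v x = J (u x)` is `u` rotated by 90 degrees
  set v : (Fin 2 → ℝ) → (Fin 2 → ℝ) := fun x => ![-(u x 1), u x 0] with hv
  set p : (Fin 2 → ℝ) → ℝ := fun x => ω x ⬝ᵥ u x with hpdef
  set g : (Fin 2 → ℝ) → Matrix (Fin 2) (Fin 2) ℝ :=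
    fun x => Matrix.of fun i j =>
      (ω x i * ω x j + (F x) ^ 2 * v x i * v x j) / p x with hg
  have hωc : ∀ i, ContDiffOn ℝ (⊤ : ℕ∞) (fun x => ω x i) Ω := fun i =>
    (ContinuousLinearMap.proj i : ((_ : Fin 2) → ℝ) →L[ℝ] ℝ).contDiff.comp_contDiffOn hω
  have huc : ∀ i, ContDiffOn ℝ (⊤ : ℕ∞) (fun x => u x i) Ω := fun i =>
    (ContinuousLinearMap.proj i : ((_ : Fin 2) → ℝ) →L[ℝ] ℝ).contDiff.comp_contDiffOn hu
  have hvc : ∀ i, ContDiffOn ℝ (⊤ : ℕ∞) (fun x => v x i) Ω := by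
    intro i
    fin_cases i
    · simpa [hv] using (huc 1).neg
    · simpa [hv] using huc 0
  have hpc : ContDiffOn ℝ (⊤ : ℕ∞) p Ω := by
    have : p = fun x => ω x 0 * u x 0 + ω x 1 * u x 1 := by
      funext x
      simp [hpdef, dotProduct, Fin.sum_univ_two]
    rw [this]
    exact ((hωc 0).mul (huc 0)).add ((hωc 1).mul (huc 1))
  have hpne : ∀ x ∈ Ω, p x ≠ 0 := fun x hx => ne_of_gt (hpair x hx)
  have hppos : ∀ x ∈ Ω, 0 < p x := fun x hx => hpair x hx
  have hpeq : ∀ x, p x = ω x 0 * u x 0 + ω x 1 * u x 1 := by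
    intro x
    simp [hpdef, dotProduct, Fin.sum_univ_two]
  refine ⟨g, ⟨?_, ?_⟩, ?_⟩
  · -- smoothness
    intro i j
    have : (fun x => g x i j) =
        fun x => (ω x i * ω x j + (F x) ^ 2 * v x i * v x j) / p x := by
      funext x
      simp [hg]
    rw [this]
    exact (((hωc i).mul (hωc j)).add
      (((hF.pow 2).mul (hvc i)).mul (hvc j))).div hpc hpne
  · -- pointwise properties
    intro x hx
    have hP := hppos x hx
    have hPne := hpne x hx
    have hFx := hFpos x hx
    have hPeq := hpeq x
    refine ⟨?_, ?_, ?_, ?_⟩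
    · -- symmetric
      ext i j
      simp only [Matrix.transpose_apply, hg, Matrix.of_apply]
      ring
    · -- positive definite
      intro y hy
      have key : y ⬝ᵥ (g x).mulVec y =
          ((ω x 0 * y 0 + ω x 1 * y 1) ^ 2 +
            (F x) ^ 2 * (v x 0 * y 0 + v x 1 * y 1) ^ 2) / p x := by
        simp only [hg, Matrix.mulVec, dotProduct, Fin.sum_univ_two,
          Matrix.of_apply]
        field_simp
        ring
      rw [key]
      apply div_pos _ hP
      set s := ω x 0 * y 0 + ω x 1 * y 1 with hs
      set t := v x 0 * y 0 + v x 1 * y 1 with ht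
      have hst : s ≠ 0 ∨ t ≠ 0 := by
        by_contra h
        push_neg at h
        apply hy
        have hv0 : v x 0 = -(u x 1) := by simp [hv]
        have hv1 : v x 1 = u x 0 := by simp [hv]
        have hy0 : y 0 * p x = u x 0 * s - ω x 1 * t := by
          rw [hPeq, hs, ht, hv0, hv1]; ring
        have hy1 : y 1 * p x = u x 1 * s + ω x 0 * t := by
          rw [hPeq, hs, ht, hv0, hv1]; ring
        rw [h.1, h.2] at hy0 hy1
        simp at hy0 hy1
        funext i
        fin_cases i
        · simpa using hy0.resolve_right hPne
        · simpa using hy1.resolve_right hPne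
      rcases hst with h | h
      · have h1 : 0 < s ^ 2 := by positivity
        nlinarith [sq_nonneg t, sq_nonneg (F x)]
      · have h1 : 0 < (F x) ^ 2 * t ^ 2 := by positivity
        nlinarith [sq_nonneg s]
    · -- determinant
      rw [Matrix.det_fin_two]
      simp only [hg, Matrix.of_apply]
      have hv0 : v x 0 = -(u x 1) := by simp [hv]
      have hv1 : v x 1 = u x 0 := by simp [hv]
      rw [hv0, hv1]
      field_simp
      rw [hPeq]
      ring
    · -- g u = ω
      funext i
      have hv0 : v x 0 = -(u x 1) := by simp [hv]
      have hv1 : v x 1 = u x 0 := by simp [hv]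
      fin_cases i <;>
      · simp only [Matrix.mulVec, dotProduct, Fin.sum_univ_two, hg,
          Matrix.of_apply, hv0, hv1]
        field_simp
        rw [hPeq]
        ring
  · -- uniqueness
    rintro g' ⟨-, hg'⟩ x hx
    obtain ⟨hs', hpos', hdet', hu'⟩ := hg' x hx
    -- our g satisfies the same properties; reprove them here quickly via aux lemma
    have hP := hppos x hx
    have hPne := hpne x hx
    have hPeq := hpeq x
    have hv0 : v x 0 = -(u x 1) := by simp [hv]
    have hv1 : v x 1 = u x 0 := by simp [hv]
    have hgs : (g x).IsSymm := by
      ext i j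
      simp only [Matrix.transpose_apply, hg, Matrix.of_apply]
      ring
    have hgdet : (g x).det = (F x) ^ 2 := by
      rw [Matrix.det_fin_two]
      simp only [hg, Matrix.of_apply]
      rw [hv0, hv1]
      field_simp
      rw [hPeq]
      ring
    have hgu : (g x).mulVec (u x) = ω x := by
      funext i
      fin_cases i <;>
      · simp only [Matrix.mulVec, dotProduct, Fin.sum_univ_two, hg,
          Matrix.of_apply, hv0, hv1]
        field_simp
        rw [hPeq]
        ring
    exact statement5_uniq_aux (F x) (u x) (ω x) (hpair x hx) (g x) (g' x)
      hgs hgdet hgu hs' hpos' hdet' hu'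
end
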